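/- Let φ_σ be the N(0, σ²) density with σ ≤ π. For 0 < s ≤ π and 0 ≤ d < min{s, π − s}, define the alternating series S = φ_σ(d) − φ_σ(s) + Σ_{k=1}^∞ [φ_σ(kπ − s) − φ_σ(kπ − d) − φ_σ(kπ + d) + φ_σ(kπ + s)]. Then S > 0 whenever d ≠ s. -/

import Mathlib

open Real

/-- The N(0, σ²) density. -/
noncomputable def gaussDensity (σ t : ℝ) : ℝ :=
  (Real.sqrt (2 * π) * σ)⁻¹ * Real.exp (-t ^ 2 / (2 * σ ^ 2))

/-!
Write `F t = φ t - φ (π - t) - φ (π + t)` and `G m t = φ (m - t) + φ (m + t)`. The series is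
`F d - F s` plus the terms `G m s - G m d` for `m = kπ`, `k ≥ 2`. As `φ' x = -(x / σ²) φ x`,
`F` decreases on `[0, π]` because `(π + t) φ (π + t) < t φ t + (π - t) φ (π - t)` for `σ ≤ π`,
and `G m` increases on `[0, m - σ] ⊇ [0, π]` because `x φ x` decreases for `x ≥ σ`.
So the head is positive for `d < s` and every further term is nonnegative.
-/

open Set

lemma gaussDensity_pos {σ : ℝ} (hσ : 0 < σ) (x : ℝ) : 0 < gaussDensity σ x := by
  unfold gaussDensity
  positivity

lemma gaussDensity_eq_mul_exp (σ x y : ℝ) :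
    gaussDensity σ x = gaussDensity σ y * exp ((y ^ 2 - x ^ 2) / (2 * σ ^ 2)) := by
  rw [gaussDensity, gaussDensity, mul_assoc, ← exp_add]
  congr 2
  ring

lemma hasDerivAt_gaussDensity (σ x : ℝ) :
    HasDerivAt (gaussDensity σ) (-(x / σ ^ 2) * gaussDensity σ x) x := by
  refine ((((hasDerivAt_pow 2 x).neg).div_const (2 * σ ^ 2)).exp.const_mul
    (√(2 * π) * σ)⁻¹).congr_deriv ?_
  simp only [gaussDensity, Pi.neg_apply, Nat.cast_ofNat]
  ring

lemma continuous_gaussDensity (σ : ℝ) : Continuous (gaussDensity σ) :=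
  continuous_iff_continuousAt.2 fun x => (hasDerivAt_gaussDensity σ x).continuousAt

lemma summable_gaussDensity_comp {σ : ℝ} (hσ : σ ≠ 0) {t : ℕ → ℝ}
    (ht : ∀ k : ℕ, (k : ℝ) ≤ t k) : Summable fun k => gaussDensity σ (t k) := by
  have hc : -(2 * σ ^ 2)⁻¹ < 0 := neg_neg_of_pos (by positivity)
  have hsq (k : ℕ) : (k : ℝ) ≤ t k ^ 2 := by
    have : (k : ℝ) ≤ (k : ℝ) ^ 2 := by exact_mod_cast Nat.le_self_pow two_ne_zero k
    nlinarith [ht k, Nat.cast_nonneg (α := ℝ) k]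
  refine ((summable_exp_nat_mul_of_ge hc hsq).mul_left (√(2 * π) * σ)⁻¹).congr fun k => ?_
  rw [gaussDensity]
  ring_nf

/-- After factoring out `φ (a + t)` and using `exp x ≥ x + 1`, this reduces to
`2 σ² < 5 a² - 2 a t`. -/
lemma mul_gaussDensity_add_lt {σ a t : ℝ} (hσ : 0 < σ) (hσa : σ ≤ a) (ht : 0 < t)
    (hta : t < a) :
    (a + t) * gaussDensity σ (a + t) <
      t * gaussDensity σ t + (a - t) * gaussDensity σ (a - t) := by
  set P := gaussDensity σ (a + t)
  set A := ((a + t) ^ 2 - t ^ 2) / (2 * σ ^ 2)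
  set B := ((a + t) ^ 2 - (a - t) ^ 2) / (2 * σ ^ 2)
  have hP : 0 < P := gaussDensity_pos hσ _
  have hlin : a + t < t * (A + 1) + (a - t) * (B + 1) := by
    have hgap : 0 < t * (5 * a ^ 2 - 2 * a * t - 2 * σ ^ 2) / (2 * σ ^ 2) :=
      div_pos (mul_pos ht (by nlinarith)) (by positivity)
    have heq : t * (A + 1) + (a - t) * (B + 1) =
        a + t + t * (5 * a ^ 2 - 2 * a * t - 2 * σ ^ 2) / (2 * σ ^ 2) := by
      simp only [A, B]
      field_simp
      ring
    linarith
  rw [gaussDensity_eq_mul_exp σ t (a + t), gaussDensity_eq_mul_exp σ (a - t) (a + t)]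
  calc (a + t) * P < (t * (A + 1) + (a - t) * (B + 1)) * P := mul_lt_mul_of_pos_right hlin hP
    _ ≤ (t * exp A + (a - t) * exp B) * P := by
        have := sub_nonneg.2 hta.le
        gcongr <;> exact add_one_le_exp _
    _ = t * (P * exp A) + (a - t) * (P * exp B) := by ring

lemma antitoneOn_mul_gaussDensity {σ : ℝ} (hσ : 0 < σ) :
    AntitoneOn (fun x => x * gaussDensity σ x) (Ici σ) := by
  have hderiv (x : ℝ) : HasDerivAt (fun x => x * gaussDensity σ x)
      ((1 - x ^ 2 / σ ^ 2) * gaussDensity σ x) x :=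
    ((hasDerivAt_id x).mul (hasDerivAt_gaussDensity σ x)).congr_deriv (by simp only [id]; ring)
  refine antitoneOn_of_hasDerivWithinAt_nonpos (convex_Ici σ)
    (continuous_id.mul (continuous_gaussDensity σ)).continuousOn
    (fun x _ => (hderiv x).hasDerivWithinAt) fun x hx => ?_
  rw [interior_Ici] at hx
  have : 1 ≤ x ^ 2 / σ ^ 2 := (one_le_div (by positivity)).2 (by nlinarith [mem_Ioi.1 hx])
  exact mul_nonpos_of_nonpos_of_nonneg (by linarith) (gaussDensity_pos hσ x).le

lemma strictAntiOn_gaussDensity_sub_sub {σ a : ℝ} (hσ : 0 < σ) (hσa : σ ≤ a) :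
    StrictAntiOn (fun t => gaussDensity σ t - gaussDensity σ (a - t) - gaussDensity σ (a + t))
      (Icc 0 a) := by
  have hderiv (t : ℝ) : HasDerivAt
      (fun t => gaussDensity σ t - gaussDensity σ (a - t) - gaussDensity σ (a + t))
      (((a + t) * gaussDensity σ (a + t) -
        (t * gaussDensity σ t + (a - t) * gaussDensity σ (a - t))) / σ ^ 2) t := by
    have h₁ := (hasDerivAt_gaussDensity σ (a - t)).comp t ((hasDerivAt_id t).const_sub a)
    have h₂ := (hasDerivAt_gaussDensity σ (a + t)).comp t ((hasDerivAt_id t).const_add a)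
    exact (((hasDerivAt_gaussDensity σ t).sub h₁).sub h₂).congr_deriv (by ring)
  refine strictAntiOn_of_hasDerivWithinAt_neg (convex_Icc 0 a)
    (HasDerivAt.continuousOn fun t _ => hderiv t)
    (fun t _ => (hderiv t).hasDerivWithinAt) fun t ht => ?_
  rw [interior_Icc] at ht
  exact div_neg_of_neg_of_pos (sub_neg.2 (mul_gaussDensity_add_lt hσ hσa ht.1 ht.2))
    (by positivity)

lemma monotoneOn_gaussDensity_sub_add_gaussDensity_add {σ : ℝ} (hσ : 0 < σ) (m : ℝ) :
    MonotoneOn (fun t => gaussDensity σ (m - t) + gaussDensity σ (m + t)) (Icc 0 (m - σ)) := by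
  have hderiv (t : ℝ) : HasDerivAt
      (fun t => gaussDensity σ (m - t) + gaussDensity σ (m + t))
      (((m - t) * gaussDensity σ (m - t) - (m + t) * gaussDensity σ (m + t)) / σ ^ 2) t := by
    have h₁ := (hasDerivAt_gaussDensity σ (m - t)).comp t ((hasDerivAt_id t).const_sub m)
    have h₂ := (hasDerivAt_gaussDensity σ (m + t)).comp t ((hasDerivAt_id t).const_add m)
    exact (h₁.add h₂).congr_deriv (by ring)
  refine monotoneOn_of_hasDerivWithinAt_nonneg (convex_Icc 0 (m - σ))
    (HasDerivAt.continuousOn fun t _ => hderiv t)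
    (fun t _ => (hderiv t).hasDerivWithinAt) fun t ht => ?_
  rw [interior_Icc] at ht
  have hmt : σ ≤ m - t := by linarith [ht.2]
  refine div_nonneg (sub_nonneg.2 ?_) (by positivity)
  exact antitoneOn_mul_gaussDensity hσ (mem_Ici.2 hmt) (mem_Ici.2 (by linarith [ht.1]))
    (by linarith [ht.1])

theorem stmt17_general (σ s d : ℝ) (hσ0 : 0 < σ) (hσ : σ ≤ π)
    (hs : s ≤ π) (hd0 : 0 ≤ d) (hd : d < min s (π - s)) :
    0 < gaussDensity σ d - gaussDensity σ s +
      ∑' k : ℕ,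
        (gaussDensity σ ((k + 1) * π - s) - gaussDensity σ ((k + 1) * π - d) -
          gaussDensity σ ((k + 1) * π + d) + gaussDensity σ ((k + 1) * π + s)) := by
  have hds : d < s := hd.trans_le (min_le_left _ _)
  have hk (k : ℕ) : (k : ℝ) ≤ k * π :=
    le_mul_of_one_le_right k.cast_nonneg (by linarith [pi_gt_three])
  have hsub (x : ℝ) (hx : x ≤ π) : Summable fun k : ℕ => gaussDensity σ ((k + 1) * π - x) :=
    summable_gaussDensity_comp hσ0.ne' fun k => by linarith [hk k]
  have hadd (x : ℝ) (hx : 0 ≤ x) : Summable fun k : ℕ => gaussDensity σ ((k + 1) * π + x) :=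
    summable_gaussDensity_comp hσ0.ne' fun k => by nlinarith [hk k, pi_pos]
  have hsummable := (((hsub s hs).sub (hsub d (by linarith))).sub (hadd d hd0)).add
    (hadd s (by linarith))
  have htail (k : ℕ) (hk0 : k ≠ 0) : 0 ≤ gaussDensity σ ((k + 1) * π - s) -
      gaussDensity σ ((k + 1) * π - d) - gaussDensity σ ((k + 1) * π + d) +
        gaussDensity σ ((k + 1) * π + s) := by
    have hk1 : (1 : ℝ) ≤ k := Nat.one_le_cast.2 (Nat.one_le_iff_ne_zero.2 hk0)
    have hsm : s ≤ (k + 1) * π - σ := by nlinarith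
    have := monotoneOn_gaussDensity_sub_add_gaussDensity_add hσ0 ((k + 1) * π)
      ⟨hd0, hds.le.trans hsm⟩ ⟨hd0.trans hds.le, hsm⟩ hds.le
    dsimp only at this
    linarith
  have hhead := strictAntiOn_gaussDensity_sub_sub hσ0 hσ ⟨hd0, by linarith⟩
    ⟨hd0.trans hds.le, hs⟩ hds
  have hfirst := hsummable.le_tsum 0 htail
  dsimp only at hhead
  norm_num at hfirst
  linarith

/-- with σ ≤ π, 0 < s ≤ π, 0 ≤ d < min{s, π − s}, the alternating series
S = φ_σ(d) − φ_σ(s) + Σ_{k≥1} [φ_σ(kπ − s) − φ_σ(kπ − d) − φ_σ(kπ + d) + φ_σ(kπ + s)]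
is strictly positive whenever d ≠ s. -/
theorem stmt17 (σ s d : ℝ) (hσ0 : 0 < σ) (hσ : σ ≤ π)
    (hs0 : 0 < s) (hs : s ≤ π) (hd0 : 0 ≤ d) (hd : d < min s (π - s)) (hne : d ≠ s) :
    0 < gaussDensity σ d - gaussDensity σ s +
      ∑' k : ℕ,
        (gaussDensity σ ((k + 1) * π - s) - gaussDensity σ ((k + 1) * π - d) -
          gaussDensity σ ((k + 1) * π + d) + gaussDensity σ ((k + 1) * π + s)) :=
  stmt17_general σ s d hσ0 hσ hs hd0 hd
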